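/- arXiv:2108.09298 — 2 statements merged into one kernel-verified Lean document; each statement's English description precedes it below -/
import Mathlib

section
/- Let A→B→C and D→E→F be the rows of a commutative diagram of vector spaces consisting of two adjacent middle exact squares (i.e. both the left square A,B,D,E and the right square B,C,E,F are middle exact). Then f_{EF}⁻¹(Im f_{DF} + Im f_{BF}) = Im f_{DE} + Im f_{BE}, where f_{BF} = f_{EF} ∘ f_{BE}. -/
/-- For two adjacent middle exact squares with rows `A → B → C` and
`D → E → F`, we have `f_{EF}⁻¹(Im f_{DF} + Im f_{BF}) = Im f_{DE} + Im f_{BE}`. -/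
theorem stmt0 {K A B C D E F : Type*} [Field K]
    [AddCommGroup A] [Module K A] [AddCommGroup B] [Module K B]
    [AddCommGroup C] [Module K C] [AddCommGroup D] [Module K D]
    [AddCommGroup E] [Module K E] [AddCommGroup F] [Module K F]
    (fAB : A →ₗ[K] B) (fBC : B →ₗ[K] C)
    (fDE : D →ₗ[K] E) (fEF : E →ₗ[K] F)
    (fAD : A →ₗ[K] D) (fBE : B →ₗ[K] E) (fCF : C →ₗ[K] F)
    -- the left square is commutative and middle exact
    (hleft : ∀ (b : B) (d : D), fBE b = fDE d ↔ ∃ a, fAB a = b ∧ fAD a = d)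
    -- the right square is commutative and middle exact
    (hright : ∀ (c : C) (e : E), fCF c = fEF e ↔ ∃ b, fBC b = c ∧ fBE b = e) :
    Submodule.comap fEF
        (LinearMap.range (fEF ∘ₗ fDE) ⊔ LinearMap.range (fEF ∘ₗ fBE)) =
      LinearMap.range fDE ⊔ LinearMap.range fBE := by
  apply le_antisymm
  · intro e he
    rw [Submodule.mem_comap, Submodule.mem_sup] at he
    obtain ⟨y, ⟨d, hd⟩, z, ⟨b, hb⟩, hyz⟩ := he
    have h0 : fEF (e - fDE d - fBE b) = 0 := by
      simp only [map_sub]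
      simp only [LinearMap.comp_apply] at hd hb
      rw [hd, hb, ← hyz]; abel
    have : fCF 0 = fEF (e - fDE d - fBE b) := by rw [h0, map_zero]
    obtain ⟨b', -, hb'⟩ := (hright 0 _).mp this
    have : e = fDE d + fBE (b + b') := by
      rw [map_add, hb']; abel
    rw [this]
    exact Submodule.add_mem_sup (LinearMap.mem_range_self _ _)
      (LinearMap.mem_range_self _ _)
  · rw [sup_le_iff]
    constructor <;> rintro _ ⟨x, rfl⟩ <;>
      rw [Submodule.mem_comap] <;>
      [exact Submodule.mem_sup_left ⟨x, rfl⟩;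
       exact Submodule.mem_sup_right ⟨x, rfl⟩]
end

section
/- Let F : Pᵒᵖ → Vect_K be a functor on a poset P, u ∈ P, and suppose (u_k) is an increasing sequence in P with supremum u such that the natural map F(u) → lim_k F(u_k) is an isomorphism (sequential continuity at u). If each F(u_k) is finite-dimensional, then Im(F(u₁ ≤ u) : F(u) → F(u₁)) = ⋂_k Im(F(u₁ ≤ u_k) : F(u_k) → F(u₁)). -/
/-- Let `F` be a contravariant functor on a poset `P`, and let
`(u_k)` be an increasing sequence with supremum `u` such that the canonical map
`F(u) → lim_k F(u_k)` is an isomorphism, all `F(u_k)` being finite-dimensional.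
Then `Im(F(u₀ ≤ u)) = ⋂_k Im(F(u₀ ≤ u_k))`. -/
theorem stmt12 (K : Type*) [Field K] {P : Type*} [PartialOrder P]
    (V : P → Type*) [∀ p, AddCommGroup (V p)] [∀ p, Module K (V p)]
    (Fmap : ∀ u w : P, u ≤ w → (V w →ₗ[K] V u))
    (hid : ∀ u, Fmap u u le_rfl = LinearMap.id)
    (hcomp : ∀ (u u' u'' : P) (h : u ≤ u') (h' : u' ≤ u''),
      (Fmap u u' h).comp (Fmap u' u'' h') = Fmap u u'' (h.trans h'))
    (seq : ℕ → P) (hmono : Monotone seq) (u : P)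
    (hsup : IsLUB (Set.range seq) u)
    [hfd : ∀ k, FiniteDimensional K (V (seq k))]
    -- the canonical map `F(u) → lim_k F(u_k)` is an isomorphism: every
    -- compatible family comes from a unique element of `F(u)`
    (hlim : ∀ a : ∀ k, V (seq k),
      (∀ k, Fmap (seq k) (seq (k + 1)) (hmono (Nat.le_succ k)) (a (k + 1)) = a k) →
      ∃! x : V u, ∀ k, Fmap (seq k) u (hsup.1 (Set.mem_range_self k)) x = a k) :
    LinearMap.range (Fmap (seq 0) u (hsup.1 (Set.mem_range_self 0))) =
      ⨅ k : ℕ, LinearMap.range (Fmap (seq 0) (seq k) (hmono (Nat.zero_le k))) := by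
  -- eventual images
  set E : ∀ k : ℕ, Submodule K (V (seq k)) := fun k =>
    ⨅ (m : ℕ) (h : k ≤ m), LinearMap.range (Fmap (seq k) (seq m) (hmono h)) with hE
  have hEle : ∀ k m (h : k ≤ m), E k ≤ LinearMap.range (Fmap (seq k) (seq m) (hmono h)) := by
    intro k m h
    exact (iInf_le _ m).trans (iInf_le _ h)
  have hrange_anti : ∀ k m m' (h : k ≤ m) (h' : m ≤ m'),
      LinearMap.range (Fmap (seq k) (seq m') (hmono (h.trans h'))) ≤
        LinearMap.range (Fmap (seq k) (seq m) (hmono h)) := by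
    intro k m m' h h'
    rw [← hcomp _ _ _ (hmono h) (hmono h')]
    exact LinearMap.range_comp_le_range _ _
  -- key surjectivity lemma (Mittag-Leffler via Artinian stabilization)
  have key : ∀ k, ∀ y ∈ E k, ∃ z, z ∈ E (k + 1) ∧
      Fmap (seq k) (seq (k + 1)) (hmono (Nat.le_succ k)) z = y := by
    intro k y hy
    obtain ⟨N, hN⟩ := IsArtinian.monotone_stabilizes (R := K) (M := V (seq (k + 1)))
      ⟨fun m => OrderDual.toDual
        (LinearMap.range (Fmap (seq (k + 1)) (seq (k + 1 + m)) (hmono (Nat.le_add_right _ _)))),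
        fun m m' hm => hrange_anti (k + 1) (k + 1 + m) (k + 1 + m')
          (Nat.le_add_right _ _) (by omega)⟩
    have hy' : y ∈ LinearMap.range
        (Fmap (seq k) (seq (k + 1 + N)) (hmono (by omega : k ≤ k + 1 + N))) :=
      hEle k (k + 1 + N) (by omega) hy
    obtain ⟨w, hw⟩ := hy'
    refine ⟨Fmap (seq (k + 1)) (seq (k + 1 + N)) (hmono (Nat.le_add_right _ _)) w, ?_, ?_⟩
    · -- membership in E (k+1)
      simp only [hE, Submodule.mem_iInf]
      intro m hm
      obtain ⟨c, rfl⟩ := Nat.exists_eq_add_of_le hm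
      by_cases hc : c ≤ N
      · exact hrange_anti (k + 1) (k + 1 + c) (k + 1 + N) (Nat.le_add_right _ _) (by omega)
          ⟨w, rfl⟩
      · have heq : LinearMap.range (Fmap (seq (k + 1)) (seq (k + 1 + N))
              (hmono (Nat.le_add_right _ _))) =
            LinearMap.range (Fmap (seq (k + 1)) (seq (k + 1 + c))
              (hmono (Nat.le_add_right _ _))) := hN c (by omega)
        exact heq ▸ ⟨w, rfl⟩
    · rw [← hw, ← LinearMap.comp_apply, hcomp]
  refine le_antisymm (le_iInf fun k => ?_) ?_
  · rintro x ⟨y, rfl⟩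
    exact ⟨Fmap (seq k) u (hsup.1 (Set.mem_range_self k)) y,
      by rw [← LinearMap.comp_apply, hcomp]⟩
  · intro x hx
    have hx0 : x ∈ E 0 := by
      simp only [hE, Submodule.mem_iInf]
      intro m _
      exact (Submodule.mem_iInf _).mp hx m
    let a : ∀ k, {z : V (seq k) // z ∈ E k} := fun k =>
      Nat.rec ⟨x, hx0⟩ (fun k p => ⟨(key k p.1 p.2).choose,
        (key k p.1 p.2).choose_spec.1⟩) k
    have compat : ∀ k, Fmap (seq k) (seq (k + 1)) (hmono (Nat.le_succ k)) (a (k + 1)).1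
        = (a k).1 := fun k => (key k (a k).1 (a k).2).choose_spec.2
    obtain ⟨X, hX, -⟩ := hlim (fun k => (a k).1) compat
    exact ⟨X, hX 0⟩
end
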